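/- For any feasible solution x' to (IP') there exists a feasible solution x to (IP) with the same objective value: ∑_{j∈𝒥} ∑_{t∈𝒯} f_j(t) x_{jt} = ∑_{j∈𝒥} ∑_{t∈𝒯̂} f'_j(t) x'_{jt}. -/

import Mathlib

/-!
Send each endpoint `u ∈ 𝒯̂` to the last time `r u` before the next endpoint (or to `T`), and
set `x_{j, r u} = x'_{j u}`. Since `f'_j(u) = f_j(r u)`, the costs agree. The map `r` is
strictly increasing with `u ≤ r u`, so `x` is again an assignment, and for `t ∈ 𝒯`
the jobs that `x` completes at or after `t` are exactly those that `x'` completes at or after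
`t'`, the last endpoint `≤ t`; since `D(t) ≤ D(t')`, the demand constraint at `t` follows
from that of `x'` at `t'`.
-/

open Finset
open scoped Classical

/-- `t` belongs to class `k` of the cost function `g`: class `0` is `{t : g t = 0}` and,
for `k ≥ 1`, class `k` is `{t : (1+ε)^(k−1) ≤ g t < (1+ε)^k}`. -/
def InClass (ε : ℝ) (g : ℕ → ℕ) (k t : ℕ) : Prop :=
  if k = 0 then g t = 0
  else (1 + ε) ^ (k - 1) ≤ (g t : ℝ) ∧ (g t : ℝ) < (1 + ε) ^ k

/-- The set `𝒯̂_j` of left endpoints: the times `t ∈ 𝒯 = {1,…,T}` that are the minimum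
element of some (nonempty) class of `g`. -/
noncomputable def leftEnds (T : ℕ) (ε : ℝ) (g : ℕ → ℕ) : Finset ℕ :=
  (Icc 1 T).filter fun t => ∃ k : ℕ,
    InClass ε g k t ∧ ∀ s ∈ Icc 1 T, InClass ε g k s → t ≤ s

/-- The set of interval endpoints `𝒯̂ = (∪_{j∈𝒥} 𝒯̂_j) ∪ {1}`. -/
noncomputable def That {n : ℕ} (T : ℕ) (ε : ℝ) (f : Fin n → ℕ → ℕ) : Finset ℕ :=
  (univ.biUnion fun j => leftEnds T ε (f j)) ∪ {1}

/-- The rounded cost function `f'`: writing `𝒯̂ = {t_1 < t_2 < ⋯ < t_τ}`, we set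
`f'_j(t_i) = f_j(t_{i+1} − 1)` for `i < τ` and `f'_j(t_τ) = f_j(T)`.  (For `t ∈ 𝒯̂`, the
`min` below is the next endpoint of `𝒯̂` after `t`, or `T + 1` if there is none.) -/
noncomputable def fround {n : ℕ} (T : ℕ) (ε : ℝ) (f : Fin n → ℕ → ℕ)
    (j : Fin n) (t : ℕ) : ℕ :=
  f j ((WithTop.untopD (T + 1) ((That T ε f).filter fun s => t < s).min) - 1)

section PushAlong

variable {α β M : Type*} [DecidableEq β]

def pushAlong [AddCommMonoid M] (S : Finset α) (r : α → β) (y : α → M) (b : β) : M :=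
  ∑ a ∈ S with r a = b, y a

variable {S : Finset α} {r : α → β}

theorem sum_pushAlong [AddCommMonoid M] {B : Finset β} (h : ∀ a ∈ S, r a ∈ B) (y : α → M) :
    ∑ b ∈ B, pushAlong S r y b = ∑ a ∈ S, y a :=
  sum_fiberwise_of_maps_to h y

theorem sum_mul_pushAlong [NonUnitalNonAssocSemiring M] (B : Finset β) (g : β → M)
    (y : α → M) :
    ∑ b ∈ B, g b * pushAlong S r y b = ∑ a ∈ S with r a ∈ B, g (r a) * y a := by
  rw [← sum_fiberwise_eq_sum_filter]
  refine sum_congr rfl fun b _ => ?_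
  rw [pushAlong, mul_sum]
  exact sum_congr rfl fun a ha => by rw [(mem_filter.mp ha).2]

theorem pushAlong_eq_zero_or_exists [AddCommMonoid M] (hr : Set.InjOn r S) (y : α → M)
    (b : β) : pushAlong S r y b = 0 ∨ ∃ a ∈ S, pushAlong S r y b = y a := by
  rcases (S.filter fun a => r a = b).eq_empty_or_nonempty with h | ⟨a, ha⟩
  · exact Or.inl (by rw [pushAlong, h, sum_empty])
  · obtain ⟨haS, rfl⟩ := mem_filter.mp ha
    have hfib : S.filter (fun a' => r a' = r a) = {a} :=
      eq_singleton_iff_unique_mem.mpr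
        ⟨ha, fun a' ha' => hr (mem_filter.mp ha').1 haS (mem_filter.mp ha').2⟩
    exact Or.inr ⟨a, haS, by rw [pushAlong, hfib, sum_singleton]⟩

end PushAlong

section NextEnd

/-- For `S = {t_1 < ⋯ < t_τ}` this sends `t_i` to `t_{i+1} - 1` and `t_τ` to `T`. -/
noncomputable def nextEnd (T : ℕ) (S : Finset ℕ) (u : ℕ) : ℕ :=
  WithTop.untopD (T + 1) (S.filter fun s => u < s).min - 1

variable {T : ℕ} {S : Finset ℕ}

theorem le_nextEnd_iff {t : ℕ} (u : ℕ) (ht : t ≤ T) :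
    t ≤ nextEnd T S u ↔ ∀ v ∈ S, u < v → t < v := by
  unfold nextEnd
  rcases (S.filter fun s => u < s).eq_empty_or_nonempty with h | h
  · rw [min_eq_top.mpr h, WithTop.untopD_top]
    refine ⟨fun _ v hv huv => absurd (mem_filter.mpr ⟨hv, huv⟩) (h ▸ notMem_empty v),
      fun _ => by omega⟩
  · rw [← coe_min' h, WithTop.untopD_coe]
    obtain ⟨hmS, hum⟩ := mem_filter.mp (min'_mem _ h)
    constructor
    · intro hle v hv huv
      have : (S.filter fun s => u < s).min' h ≤ v := min'_le _ v (mem_filter.mpr ⟨hv, huv⟩)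
      omega
    · intro hlt
      have := hlt _ hmS hum
      omega

theorem nextEnd_le (hS : ∀ s ∈ S, s ≤ T) (u : ℕ) : nextEnd T S u ≤ T := by
  unfold nextEnd
  rcases (S.filter fun s => u < s).eq_empty_or_nonempty with h | h
  · rw [min_eq_top.mpr h, WithTop.untopD_top]
    omega
  · rw [← coe_min' h, WithTop.untopD_coe]
    have := hS _ (mem_filter.mp (min'_mem _ h)).1
    omega

theorem le_nextEnd {u : ℕ} (hu : u ≤ T) : u ≤ nextEnd T S u :=
  (le_nextEnd_iff u hu).mpr fun _ _ huv => huv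

theorem nextEnd_lt {u v : ℕ} (hv : v ∈ S) (hvT : v ≤ T) (huv : u < v) : nextEnd T S u < v :=
  lt_of_not_ge fun hle => lt_irrefl v ((le_nextEnd_iff u hvT).mp hle v hv huv)

theorem strictMonoOn_nextEnd (hS : ∀ s ∈ S, s ≤ T) : StrictMonoOn (nextEnd T S) S :=
  fun _ _ v hv huv => (nextEnd_lt hv (hS v hv) huv).trans_le (le_nextEnd (hS v hv))

theorem nextEnd_mem_Icc (hS : S ⊆ Icc 1 T) {u : ℕ} (hu : u ∈ S) : nextEnd T S u ∈ Icc 1 T :=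
  mem_Icc.mpr ⟨(mem_Icc.mp (hS hu)).1.trans (le_nextEnd (mem_Icc.mp (hS hu)).2),
    nextEnd_le (fun _ hs => (mem_Icc.mp (hS hs)).2) u⟩

theorem exists_filter_nextEnd_mem_Icc (hS : S ⊆ Icc 1 T) (h1 : 1 ∈ S) {t : ℕ}
    (ht : t ∈ Icc 1 T) :
    ∃ t' ∈ S, t' ≤ t ∧ S.filter (fun u => nextEnd T S u ∈ Icc t T) = S.filter (t' ≤ ·) := by
  have hST : ∀ s ∈ S, s ≤ T := fun _ hs => (mem_Icc.mp (hS hs)).2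
  have hne : (S.filter (· ≤ t)).Nonempty := ⟨1, mem_filter.mpr ⟨h1, (mem_Icc.mp ht).1⟩⟩
  obtain ⟨ht'S, ht't⟩ := mem_filter.mp (max'_mem _ hne)
  refine ⟨_, ht'S, ht't, filter_congr fun u hu => ?_⟩
  rw [mem_Icc, and_iff_left (nextEnd_le hST u), le_nextEnd_iff u (mem_Icc.mp ht).2]
  constructor
  · intro h
    by_contra! hlt
    exact absurd (h _ ht'S hlt) (not_lt.mpr ht't)
  · intro h v hv huv
    by_contra! hvt
    exact absurd (le_max' _ v (mem_filter.mpr ⟨hv, hvt⟩)) (not_le.mpr (h.trans_lt huv))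

end NextEnd

theorem one_mem_That {n : ℕ} (T : ℕ) (ε : ℝ) (f : Fin n → ℕ → ℕ) : 1 ∈ That T ε f :=
  mem_union_right _ (mem_singleton_self 1)

theorem That_subset_Icc {n T : ℕ} (hT : 1 ≤ T) (ε : ℝ) (f : Fin n → ℕ → ℕ) :
    That T ε f ⊆ Icc 1 T := by
  refine union_subset (biUnion_subset.mpr fun j _ => filter_subset _ _) ?_
  exact singleton_subset_iff.mpr (mem_Icc.mpr ⟨le_rfl, hT⟩)

theorem stmt_13_general {n : ℕ} (ε : ℝ)
    (p : Fin n → ℕ) (hp : ∀ j, 0 < p j)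
    (T : ℕ) (hT : T = ∑ j, p j)
    (f : Fin n → ℕ → ℕ)
    (x' : Fin n → ℕ → ℕ)
    (hx01 : ∀ j t, x' j t = 0 ∨ x' j t = 1)
    (hxa : ∀ j, ∑ t ∈ That T ε f, x' j t = 1)
    (hxc : ∀ t ∈ That T ε f,
      T + 1 - t ≤ ∑ j, ∑ s ∈ (That T ε f).filter (fun s => t ≤ s), p j * x' j s) :
    ∃ x : Fin n → ℕ → ℕ,
      (∀ j t, x j t = 0 ∨ x j t = 1) ∧
      (∀ j, ∑ t ∈ Icc 1 T, x j t = 1) ∧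
      (∀ t ∈ Icc 1 T, T + 1 - t ≤ ∑ j, ∑ s ∈ Icc t T, p j * x j s) ∧
      ∑ j, ∑ t ∈ Icc 1 T, f j t * x j t = ∑ j, ∑ t ∈ That T ε f, fround T ε f j t * x' j t := by
  rcases Nat.eq_zero_or_pos n with rfl | hn
  · subst hT
    exact ⟨0, finZeroElim, finZeroElim, by simp, by simp⟩
  have hT1 : 1 ≤ T := hT ▸ (hp ⟨0, hn⟩).trans_le (single_le_sum (by simp) (mem_univ _))
  set S := That T ε f
  have hS : S ⊆ Icc 1 T := That_subset_Icc hT1 ε f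
  have hmaps : ∀ u ∈ S, nextEnd T S u ∈ Icc 1 T := fun _ hu => nextEnd_mem_Icc hS hu
  have hinj : Set.InjOn (nextEnd T S) S :=
    (strictMonoOn_nextEnd fun _ hs => (mem_Icc.mp (hS hs)).2).injOn
  refine ⟨fun j => pushAlong S (nextEnd T S) (x' j), fun j t => ?_, fun j => ?_,
    fun t ht => ?_, sum_congr rfl fun j _ => ?_⟩
  · dsimp only
    rcases pushAlong_eq_zero_or_exists hinj (x' j) t with h | ⟨u, -, h⟩
    · exact Or.inl h
    · exact h ▸ hx01 j u
  · rw [sum_pushAlong hmaps, hxa]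
  · obtain ⟨t', ht'S, ht't, hfilter⟩ := exists_filter_nextEnd_mem_Icc hS (one_mem_That T ε f) ht
    calc T + 1 - t ≤ T + 1 - t' := Nat.sub_le_sub_left ht't _
      _ ≤ ∑ j, ∑ u ∈ S with t' ≤ u, p j * x' j u := hxc t' ht'S
      _ = ∑ j, ∑ s ∈ Icc t T, p j * pushAlong S (nextEnd T S) (x' j) s := by
        simp only [sum_mul_pushAlong _ (fun _ => p _), hfilter]
  · rw [sum_mul_pushAlong, filter_true_of_mem hmaps]
    -- `fround T ε f j u` unfolds to `f j (nextEnd T S u)`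
    rfl

/-- For any feasible solution `x'` to (IP') there exists a feasible
solution `x` to (IP) with the same objective value:
`∑_{j∈𝒥} ∑_{t∈𝒯} f_j(t) x_{jt} = ∑_{j∈𝒥} ∑_{t∈𝒯̂} f'_j(t) x'_{jt}`.
(Here `D(t) = T − t + 1`, written as the truncated subtraction `T + 1 - t`.) -/
theorem stmt_13 {n : ℕ} (ε : ℝ) (hε : 0 < ε)
    (p : Fin n → ℕ) (hp : ∀ j, 0 < p j)
    (T : ℕ) (hT : T = ∑ j, p j)
    (f : Fin n → ℕ → ℕ) (hf0 : ∀ j, f j 0 = 0)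
    (hfmono : ∀ j, ∀ s t : ℕ, s ≤ t → t ≤ T → f j s ≤ f j t)
    (x' : Fin n → ℕ → ℕ)
    (hx01 : ∀ j t, x' j t = 0 ∨ x' j t = 1)
    (hxa : ∀ j, ∑ t ∈ That T ε f, x' j t = 1)
    (hxc : ∀ t ∈ That T ε f,
      T + 1 - t ≤ ∑ j, ∑ s ∈ (That T ε f).filter (fun s => t ≤ s), p j * x' j s) :
    ∃ x : Fin n → ℕ → ℕ,
      (∀ j t, x j t = 0 ∨ x j t = 1) ∧
      (∀ j, ∑ t ∈ Icc 1 T, x j t = 1) ∧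
      (∀ t ∈ Icc 1 T, T + 1 - t ≤ ∑ j, ∑ s ∈ Icc t T, p j * x j s) ∧
      ∑ j, ∑ t ∈ Icc 1 T, f j t * x j t = ∑ j, ∑ t ∈ That T ε f, fround T ε f j t * x' j t :=
  stmt_13_general ε p hp T hT f x' hx01 hxa hxc
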